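/- For all 0 < t ≤ 1 and all P, Q ∈ ℝ³, ρ_t(P,Q) = 0 if and only if P = Q. -/
import Mathlib


noncomputable section

/-- The unit 2-sphere in `ℝ³`, i.e. in `EuclideanSpace ℝ (Fin 3)`. -/
def S2 : Set (EuclideanSpace ℝ (Fin 3)) := Metric.sphere (0 : EuclideanSpace ℝ (Fin 3)) 1

/-- The angle parameter `α = arcsin ((√(2 - t²) - t) / 2)`. -/
def alphaAngle (t : ℝ) : ℝ := Real.arcsin ((Real.sqrt (2 - t ^ 2) - t) / 2)

/-- The metric `d_t` on the unit sphere: `d_t(P,Q) = d_E(P,Q)` if `∠POQ ≤ π - 2α`,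
and `d_t(P,Q) = 2t + d_E(-P,Q)` otherwise. -/
def dt (t : ℝ) (P Q : EuclideanSpace ℝ (Fin 3)) : ℝ :=
  if EuclideanGeometry.angle P (0 : EuclideanSpace ℝ (Fin 3)) Q ≤ Real.pi - 2 * alphaAngle t
  then dist P Q
  else 2 * t + dist (-P) Q

/-- A point on the unit sphere at Euclidean distance `r` (for `0 ≤ r ≤ 2`) from the
base point `spherePt 0 = (1,0,0)`. -/
def spherePt (r : ℝ) : EuclideanSpace ℝ (Fin 3) :=
  (WithLp.equiv 2 (Fin 3 → ℝ)).symm ![1 - r ^ 2 / 2, r * Real.sqrt (1 - r ^ 2 / 4), 0]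

/-- The value `d_t(ε⁻¹(X), ε⁻¹(Y))` for points `X, Y ∈ ℝ³` with `d_E(X,Y) ≤ 2`, computed
via the concrete pair of unit-sphere points `spherePt 0`, `spherePt (d_E(X,Y))` at the same
Euclidean distance; by invariance of `d_t` under Euclidean isometries this agrees with the
value obtained from any isometric embedding `ε : S² → ℝ³` whose image contains `X` and `Y`. -/
def dtChord (t r : ℝ) : ℝ := dt t (spherePt 0) (spherePt r)

/-- The set of values `∑_{i=1}^n d_t(X_{i-1}, X_i)` over all chains
`(X_0, …, X_n) ∈ Γ_{P,Q}`, i.e. chains from `P` to `Q` with all steps of Euclidean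
length at most `2`. -/
def chainSums (t : ℝ) (P Q : EuclideanSpace ℝ (Fin 3)) : Set ℝ :=
  { s : ℝ | ∃ n : ℕ, ∃ X : Fin (n + 1) → EuclideanSpace ℝ (Fin 3),
      X 0 = P ∧ X (Fin.last n) = Q ∧
      (∀ i : Fin n, dist (X i.castSucc) (X i.succ) ≤ 2) ∧
      s = ∑ i : Fin n, dtChord t (dist (X i.castSucc) (X i.succ)) }

/-- The metric `ρ_t(P,Q) = inf { ∑_{i=1}^n d_t(X_{i-1},X_i) | (X_0,…,X_n) ∈ Γ_{P,Q} }`. -/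
def rho (t : ℝ) (P Q : EuclideanSpace ℝ (Fin 3)) : ℝ := sInf (chainSums t P Q)

lemma dist_spherePt (r : ℝ) (h0 : 0 ≤ r) (h2 : r ≤ 2) :
    dist (spherePt 0) (spherePt r) = r := by
  have h4 : 0 ≤ 1 - r ^ 2 / 4 := by nlinarith
  have hs : Real.sqrt (1 - r ^ 2 / 4) ^ 2 = 1 - r ^ 2 / 4 := Real.sq_sqrt h4
  rw [EuclideanSpace.dist_eq]
  have : ∑ i, dist (spherePt 0 i) (spherePt r i) ^ 2 = r ^ 2 := by
    simp [spherePt, Fin.sum_univ_three, Real.dist_eq, sq_abs]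
    nlinarith [hs]
  rw [this, Real.sqrt_sq h0]

lemma dtChord_nonneg (t r : ℝ) (ht : 0 < t) : 0 ≤ dtChord t r := by
  unfold dtChord dt
  split
  · exact dist_nonneg
  · positivity

lemma dtChord_lb (t r : ℝ) (ht0 : 0 < t) (ht1 : t ≤ 1) (h0 : 0 ≤ r) (h2 : r ≤ 2) :
    t * r / 2 ≤ dtChord t r := by
  unfold dtChord dt
  split
  · rw [dist_spherePt r h0 h2]; nlinarith
  · have := dist_nonneg (x := -(spherePt 0)) (y := spherePt r)
    nlinarith

theorem rho_eq_zero_iff (t : ℝ) (ht0 : 0 < t) (ht1 : t ≤ 1)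
    (P Q : EuclideanSpace ℝ (Fin 3)) :
    rho t P Q = 0 ↔ P = Q := by
  have lb : ∀ s ∈ chainSums t P Q, t * dist P Q / 2 ≤ s := by
    rintro s ⟨n, X, hX0, hXn, hstep, rfl⟩
    have key : dist P Q ≤ ∑ i : Fin n, dist (X i.castSucc) (X i.succ) := by
      set f : ℕ → EuclideanSpace ℝ (Fin 3) :=
        fun k => X ⟨min k n, Nat.lt_succ_of_le (min_le_right _ _)⟩ with hf
      have hf0 : f 0 = P := by
        rw [hf]; simp only []
        rw [show (⟨min 0 n, Nat.lt_succ_of_le (min_le_right _ _)⟩ : Fin (n+1)) = 0 from by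
          apply Fin.ext; simp]
        exact hX0
      have hfn : f n = Q := by
        rw [hf]; simp only []
        rw [show (⟨min n n, Nat.lt_succ_of_le (min_le_right _ _)⟩ : Fin (n+1)) = Fin.last n from by
          apply Fin.ext; simp [Fin.last]]
        exact hXn
      calc dist P Q = dist (f 0) (f n) := by rw [hf0, hfn]
        _ ≤ ∑ i ∈ Finset.range n, dist (f i) (f (i+1)) := dist_le_range_sum_dist f n
        _ = ∑ i : Fin n, dist (X i.castSucc) (X i.succ) := by
              rw [← Fin.sum_univ_eq_sum_range]
              refine Finset.sum_congr rfl fun i _ => ?_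
              rw [hf]
              congr 1
              · exact congrArg X (Fin.ext (by simp [Nat.min_eq_left i.isLt.le]))
              · exact congrArg X (Fin.ext (by simp [Nat.min_eq_left i.isLt]))
    calc t * dist P Q / 2 ≤ ∑ i : Fin n, t * dist (X i.castSucc) (X i.succ) / 2 := by
          rw [← Finset.sum_div, ← Finset.mul_sum]; nlinarith
      _ ≤ ∑ i : Fin n, dtChord t (dist (X i.castSucc) (X i.succ)) :=
          Finset.sum_le_sum fun i _ => dtChord_lb t _ ht0 ht1 dist_nonneg (hstep i)
  have hne : (chainSums t P Q).Nonempty := by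
    set n : ℕ := ⌈dist P Q⌉₊ + 1 with hn
    have hnpos : (0:ℝ) < n := by positivity
    refine ⟨_, n, fun j => P + (((j : ℕ) : ℝ)/n) • (Q - P), by simp, ?_, fun i => ?_, rfl⟩
    · simp [Fin.last, div_self hnpos.ne']
    · have step : dist (P + (((i.castSucc : ℕ) : ℝ)/n) • (Q - P))
          (P + (((i.succ : ℕ) : ℝ)/n) • (Q - P)) = dist P Q / n := by
        rw [dist_eq_norm]
        have : (P + (((i.castSucc : ℕ) : ℝ)/n) • (Q - P)) - (P + (((i.succ : ℕ) : ℝ)/n) • (Q - P))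
            = ((((i:ℕ) : ℝ)/n) - (((i:ℕ)+1 : ℝ)/n)) • (Q - P) := by
          push_cast [Fin.coe_castSucc, Fin.val_succ]
          module
        rw [this, norm_smul, div_sub_div_same]
        have : ((i:ℕ) : ℝ) - (((i:ℕ):ℝ)+1) = -1 := by ring
        rw [this, dist_eq_norm]
        simp [abs_of_pos hnpos, norm_sub_rev P Q]
        ring
      rw [step]
      rw [div_le_iff₀ hnpos]
      have : dist P Q ≤ n := by
        have := Nat.le_ceil (dist P Q)
        push_cast [hn]
        linarith
      linarith
  constructor
  · intro h
    by_contra hPQ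
    have hd : 0 < dist P Q := dist_pos.mpr hPQ
    have : t * dist P Q / 2 ≤ rho t P Q := le_csInf hne lb
    rw [h] at this
    nlinarith
  · rintro rfl
    have h0 : (0:ℝ) ∈ chainSums t P P := ⟨0, fun _ => P, rfl, rfl, by simp, by simp⟩
    have hbdd : BddBelow (chainSums t P P) := ⟨0, fun s hs => le_trans (by simp) (lb s hs)⟩
    refine le_antisymm (csInf_le hbdd h0) (le_csInf ⟨0, h0⟩ fun s hs => le_trans (by simp) (lb s hs))
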